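/- Fix 0<q<1 and an integer n ≥ 1, and let G_n(·;q) be the multiple q-gamma function defined by G_n(z+1;q) := (1-q)^{-binom(z,n)} · ∏_{k=1}^∞ ((1-q^{z+k})/(1-q^k))^{-binom(-k,n-1)} · (1-q^k)^{binom(z-k,n-1)-binom(-k,n-1)}. Then the function x ↦ log G_n(x+1;q) is (n+1)-times differentiable on (0,∞) and its (n+1)-st derivative satisfies (d/dx)^{n+1} log G_n(x+1;q) ≥ 0 for all real x ≥ 0. -/

import Mathlib

open Filter Topology MeasureTheory

noncomputable section

/-- Generalized binomial coefficient `binom(z,n) = z(z-1)⋯(z-n+1)/n!` (real). -/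
def gbinom (z : ℝ) (n : ℕ) : ℝ := (∏ i ∈ Finset.range n, (z - i)) / (n.factorial : ℝ)

/-- The `k`-th factor (for `k ≥ 1`, indexed by `k-1 : ℕ`) of the infinite product defining the
multiple `q`-gamma function `G_n(z+1;q)`, namely
`((1-q^{z+k})/(1-q^k))^{-binom(-k,n-1)} · (1-q^k)^{binom(z-k,n-1) - binom(-k,n-1)}`. -/
def qGammaTerm (n : ℕ) (q z : ℝ) (k : ℕ) : ℝ :=
  ((1 - q ^ (z + (k : ℝ) + 1)) / (1 - q ^ ((k : ℝ) + 1))) ^ (-gbinom (-((k : ℝ) + 1)) (n - 1)) *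
    (1 - q ^ ((k : ℝ) + 1)) ^
      (gbinom (z - ((k : ℝ) + 1)) (n - 1) - gbinom (-((k : ℝ) + 1)) (n - 1))

/-- The multiple `q`-gamma function `G_n(z;q)`: `G_0(z;q) = (1-q^z)/(1-q)` and, for `n ≥ 1`,
`G_n(z+1;q) = (1-q)^{-binom(z,n)} · ∏_{k=1}^∞ qGammaTerm n q z k`. -/
def qMultiGamma (n : ℕ) (q : ℝ) (z : ℝ) : ℝ :=
  if n = 0 then (1 - q ^ z) / (1 - q)
  else (1 - q) ^ (-gbinom (z - 1) n) * ∏' k : ℕ, qGammaTerm n q (z - 1) k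

end

/-!
Taking logarithms turns the product into a series. Since
`-binom(-k, n-1) = (-1)^n binom(k+n-2, n-1)`, for `x > -1` we get
`log G_n(x+1;q) = P(x) + (-1)^n ∑_{k ≥ 1} binom(k+n-2, n-1) log(1 - q^{x+k})`,
where `P` collects `-binom(x,n) log(1-q)` and the terms `binom(x-k, n-1) log(1-q^k)` and is
therefore a polynomial of degree at most `n`. Expanding `log(1 - t) = -∑_{m ≥ 1} t^m/m` turns the
second part into an absolutely convergent exponential series `∑ c_{k,m} e^{m x log q}` with
`sign c_{k,m} = (-1)^{n+1}`, which can be differentiated termwise. The `(n+1)`-st derivative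
kills `P` and multiplies each term by `(m log q)^{n+1}`, of sign `(-1)^{n+1}` as well, so every
term of the differentiated series is nonnegative.
-/

open Set Real Polynomial Finset
open scoped Nat

section DerivSequence

variable {𝕜 F : Type*} [NontriviallyNormedField 𝕜] [NormedAddCommGroup F] [NormedSpace 𝕜 F]
  {s : Set 𝕜} {g : ℕ → 𝕜 → F} {f : 𝕜 → F}

theorem iteratedDeriv_eqOn_of_hasDerivAt_succ (hs : IsOpen s)
    (hg : ∀ j, ∀ x ∈ s, HasDerivAt (g j) (g (j + 1) x) x) (hf : EqOn f (g 0) s) :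
    ∀ j, EqOn (iteratedDeriv j f) (g j) s
  | 0 => by simpa using hf
  | j + 1 => fun x hx => by
    rw [iteratedDeriv_succ, ((iteratedDeriv_eqOn_of_hasDerivAt_succ hs hg hf j).eventuallyEq_of_mem
      (hs.mem_nhds hx)).deriv_eq]
    exact (hg j x hx).deriv

theorem contDiffOn_of_hasDerivAt_succ (hs : IsOpen s)
    (hg : ∀ j, ∀ x ∈ s, HasDerivAt (g j) (g (j + 1) x) x) (hf : EqOn f (g 0) s) {N : ℕ∞} :
    ContDiffOn 𝕜 N f s := by
  refine contDiffOn_of_differentiableOn_deriv fun m _ => ?_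
  refine fun x hx => ((hg m x hx).differentiableAt.differentiableWithinAt).congr (fun y hy => ?_) ?_
  all_goals
    rw [iteratedDerivWithin_of_isOpen hs ‹_›, iteratedDeriv_eqOn_of_hasDerivAt_succ hs hg hf m ‹_›]

end DerivSequence

section ExpSeries

variable {ι : Type*} {c ν : ι → ℝ} {x₀ : ℝ}

noncomputable def expSeries (c ν : ι → ℝ) (x : ℝ) : ℝ := ∑' i, c i * exp (ν i * x)

theorem abs_mul_exp_le_of_le (hν : ∀ i, ν i ≤ 0) {x : ℝ} (hx : x₀ ≤ x) (i : ι) :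
    |c i * exp (ν i * x)| ≤ |c i| * exp (ν i * x₀) := by
  rw [abs_mul, abs_of_pos (exp_pos _)]
  exact mul_le_mul_of_nonneg_left (exp_le_exp.2 (mul_le_mul_of_nonpos_left hx (hν i)))
    (abs_nonneg _)

theorem hasDerivAt_expSeries (hν : ∀ i, ν i ≤ 0)
    (hc : Summable fun i => |c i| * exp (ν i * x₀))
    (hcν : Summable fun i => |c i * ν i| * exp (ν i * x₀)) {x : ℝ} (hx : x₀ < x) :
    HasDerivAt (expSeries c ν) (expSeries (fun i => c i * ν i) ν x) x := by
  have hterm : ∀ i y, HasDerivAt (fun z => c i * exp (ν i * z)) (c i * ν i * exp (ν i * y)) y :=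
    fun i y => by
      simpa [mul_comm, mul_left_comm, mul_assoc] using
        (((hasDerivAt_id y).const_mul (ν i)).exp).const_mul (c i)
  refine hasDerivAt_tsum_of_isPreconnected hcν isOpen_Ioi isPreconnected_Ioi
    (fun i y _ => hterm i y) (fun i y hy => ?_) hx ?_ hx
  · simpa [mul_assoc] using abs_mul_exp_le_of_le (c := fun i => c i * ν i) hν (le_of_lt hy) i
  · exact .of_norm_bounded hc (abs_mul_exp_le_of_le hν hx.le)

theorem hasDerivAt_expSeries_mul_pow (hν : ∀ i, ν i ≤ 0)
    (hsum : ∀ j : ℕ, Summable fun i => |c i| * |ν i| ^ j * exp (ν i * x₀)) (j : ℕ) {x : ℝ}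
    (hx : x₀ < x) :
    HasDerivAt (expSeries (fun i => c i * ν i ^ j) ν)
      (expSeries (fun i => c i * ν i ^ (j + 1)) ν x) x := by
  have hc : Summable fun i => |c i * ν i ^ j| * exp (ν i * x₀) := by
    simpa only [abs_mul, abs_pow] using hsum j
  have hcν : Summable fun i => |c i * ν i ^ j * ν i| * exp (ν i * x₀) := by
    simpa only [abs_mul, abs_pow, pow_succ, mul_assoc] using hsum (j + 1)
  simpa only [pow_succ, mul_assoc] using hasDerivAt_expSeries hν hc hcν hx

end ExpSeries

theorem abs_coeff_prod_X_sub_C_le {ι : Type*} (s : Finset ι) (r : ι → ℝ) (j : ℕ) :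
    |(∏ i ∈ s, (X - C (r i))).coeff j| ≤ ∏ i ∈ s, (1 + |r i|) := by
  classical
  induction s using Finset.induction_on generalizing j with
  | empty => by_cases hj : j = 0 <;> simp [coeff_one, hj]
  | insert a s ha ih =>
    rw [prod_insert ha, prod_insert ha, sub_mul, coeff_sub, coeff_C_mul, add_mul, one_mul]
    have hX : |(X * ∏ i ∈ s, (X - C (r i))).coeff j| ≤ ∏ i ∈ s, (1 + |r i|) := by
      cases j with
      | zero => simpa using prod_nonneg fun i _ => by positivity
      | succ j => simpa [coeff_X_mul] using ih j
    calc |(X * ∏ i ∈ s, (X - C (r i))).coeff j - r a * (∏ i ∈ s, (X - C (r i))).coeff j|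
        ≤ |(X * ∏ i ∈ s, (X - C (r i))).coeff j| +
            |r a| * |(∏ i ∈ s, (X - C (r i))).coeff j| := by
          rw [← abs_mul]; exact abs_sub _ _
      _ ≤ ∏ i ∈ s, (1 + |r i|) + |r a| * ∏ i ∈ s, (1 + |r i|) := by gcongr; exact ih j
      _ = _ := by ring

theorem exists_hasSum_eval_of_summable_coeff {R ι : Type*} [CommSemiring R] [TopologicalSpace R]
    [IsTopologicalSemiring R] {Q : ι → R[X]} {D : ℕ}
    (hdeg : ∀ k, (Q k).natDegree ≤ D) (hcoeff : ∀ j, Summable fun k => (Q k).coeff j) :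
    ∃ P : R[X], P.natDegree ≤ D ∧ ∀ x, HasSum (fun k => (Q k).eval x) (P.eval x) := by
  refine ⟨∑ j ∈ range (D + 1), C (∑' k, (Q k).coeff j) * X ^ j, ?_, fun x => ?_⟩
  · refine natDegree_sum_le_of_forall_le _ _ fun j hj => (natDegree_C_mul_le _ _).trans ?_
    exact (natDegree_X_pow_le j).trans (Nat.lt_succ_iff.1 (mem_range.1 hj))
  · simp only [eval_finsetSum, eval_mul, eval_C, eval_pow, eval_X]
    have h := hasSum_sum fun j (_ : j ∈ range (D + 1)) => (hcoeff j).hasSum.mul_right (x ^ j)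
    rwa [← funext fun k => eval_eq_sum_range' (Nat.lt_succ_of_le (hdeg k)) x] at h

theorem natDegree_C_mul_prod_X_sub_C_le {R ι : Type*} [CommRing R] (a : R) (s : Finset ι) (r : ι → R) :
    (C a * ∏ i ∈ s, (X - C (r i))).natDegree ≤ s.card :=
  (natDegree_C_mul_le _ _).trans <| (natDegree_prod_le _ _).trans <| by
    simpa using sum_le_card_nsmul s _ 1 fun i _ => natDegree_X_sub_C_le (r i)

theorem gbinom_neg_natCast_add_one (k d : ℕ) :
    gbinom (-((k : ℝ) + 1)) d = (-1) ^ d * ((k + d).choose d : ℝ) := by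
  have h := ascPochhammer_eval_neg_eq_descPochhammer ℝ (-((k : ℝ) + 1)) d
  rw [neg_neg, show (k : ℝ) + 1 = ((k + 1 : ℕ) : ℝ) by push_cast; ring,
    ascPochhammer_nat_eq_natCast_ascFactorial ℝ, Nat.ascFactorial_eq_factorial_mul_choose] at h
  have hsq : ((-1 : ℝ) ^ d) ^ 2 = 1 := by rw [← pow_mul, mul_comm, pow_mul]; simp
  rw [gbinom, ← descPochhammer_eval_eq_prod_range, div_eq_iff (by positivity)]
  push_cast at h
  linear_combination (-(-1 : ℝ) ^ d) * h - (descPochhammer ℝ d).eval (-((k : ℝ) + 1)) * hsq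

theorem abs_log_one_sub_le {t : ℝ} (ht0 : 0 ≤ t) (ht1 : t < 1) :
    |log (1 - t)| ≤ t / (1 - t) := by
  have h := one_sub_inv_le_log_of_pos (sub_pos.2 ht1)
  rw [abs_of_nonpos (log_nonpos (by linarith) (by linarith))]
  have hne : 1 - t ≠ 0 := (sub_pos.2 ht1).ne'
  have : 1 - (1 - t)⁻¹ = -(t / (1 - t)) := by field_simp; ring
  linarith

theorem summable_pow_add_mul_geometric (d c : ℕ) {r : ℝ} (hr0 : 0 < r) (hr1 : r < 1) :
    Summable fun k : ℕ => ((k : ℝ) + c) ^ d * r ^ k := by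
  have hr : ‖r‖ < 1 := by rwa [norm_of_nonneg hr0.le]
  have h := ((summable_nat_add_iff (f := fun m : ℕ => (m : ℝ) ^ d * r ^ m) c).2
    (summable_pow_mul_geometric_of_norm_lt_one d hr)).mul_left (r ^ c)⁻¹
  refine h.congr fun k => ?_
  rw [Nat.cast_add, pow_add]
  field_simp

section QGammaExpansion

variable (n : ℕ) (q : ℝ)

noncomputable def qGammaPolyTerm (k : ℕ) : ℝ[X] :=
  C (log (1 - q ^ (k + 1)) / (n - 1)!) * ∏ i ∈ range (n - 1), (X - C ((k : ℝ) + 1 + i))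

theorem eval_qGammaPolyTerm (k : ℕ) (x : ℝ) :
    (qGammaPolyTerm n q k).eval x =
      gbinom (x - ((k : ℝ) + 1)) (n - 1) * log (1 - q ^ (k + 1)) := by
  simp only [qGammaPolyTerm, gbinom, eval_mul, eval_C, eval_prod, eval_sub, eval_X, sub_sub]
  ring

theorem natDegree_qGammaPolyTerm_le (k : ℕ) : (qGammaPolyTerm n q k).natDegree ≤ n - 1 :=
  (natDegree_C_mul_prod_X_sub_C_le _ _ _).trans (card_range _).le

variable {n q}

theorem summable_coeff_qGammaPolyTerm (hq0 : 0 < q) (hq1 : q < 1) (j : ℕ) :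
    Summable fun k => (qGammaPolyTerm n q k).coeff j := by
  refine .of_norm_bounded ((summable_pow_add_mul_geometric (n - 1) n hq0 hq1).mul_left
    (q / (1 - q))) fun k => ?_
  have hqk : q ^ (k + 1) ≤ q := pow_le_of_le_one hq0.le hq1.le k.succ_ne_zero
  have hlog : |log (1 - q ^ (k + 1))| ≤ q ^ (k + 1) / (1 - q) :=
    (abs_log_one_sub_le (by positivity) (by linarith)).trans
      (div_le_div_of_nonneg_left (by positivity) (by linarith) (by linarith))
  have hprod : ∏ i ∈ range (n - 1), (1 + |(k : ℝ) + 1 + i|) ≤ ((k : ℝ) + n) ^ (n - 1) := by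
    calc ∏ i ∈ range (n - 1), (1 + |(k : ℝ) + 1 + i|)
        ≤ ∏ _i ∈ range (n - 1), ((k : ℝ) + n) := by
          refine prod_le_prod (fun _ _ => by positivity) fun i hi => ?_
          have : (i : ℝ) + 2 ≤ n := by
            exact_mod_cast (by have := mem_range.1 hi; omega : i + 2 ≤ n)
          rw [abs_of_nonneg (by positivity)]
          linarith
      _ = ((k : ℝ) + n) ^ (n - 1) := by rw [prod_const, card_range]
  have hfac : (1 : ℝ) ≤ (n - 1)! := by exact_mod_cast (n - 1).factorial_pos
  rw [Real.norm_eq_abs, qGammaPolyTerm, coeff_C_mul, abs_mul, abs_div,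
    abs_of_pos (by positivity : (0 : ℝ) < (n - 1)!)]
  calc |log (1 - q ^ (k + 1))| / (n - 1)! *
        |(∏ i ∈ range (n - 1), (X - C ((k : ℝ) + 1 + i))).coeff j|
      ≤ q ^ (k + 1) / (1 - q) * ((k : ℝ) + n) ^ (n - 1) :=
        mul_le_mul ((div_le_self (abs_nonneg _) hfac).trans hlog)
          ((abs_coeff_prod_X_sub_C_le _ _ j).trans hprod) (abs_nonneg _) (by positivity)
    _ = q / (1 - q) * (((k : ℝ) + n) ^ (n - 1) * q ^ k) := by ring

theorem one_sub_rpow_pos (hq0 : 0 < q) (hq1 : q < 1) {s : ℝ} (hs : 0 < s) : 0 < 1 - q ^ s :=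
  sub_pos.2 (rpow_lt_one hq0.le hq1 hs)

theorem log_qGammaTerm (hq0 : 0 < q) (hq1 : q < 1) {x : ℝ} (hx : -1 < x) (k : ℕ) :
    log (qGammaTerm n q x k) = (qGammaPolyTerm n q k).eval x +
      -((-1) ^ (n - 1) * ((k + (n - 1)).choose (n - 1) : ℝ)) * log (1 - q ^ (x + k + 1)) := by
  have hA := one_sub_rpow_pos hq0 hq1 (s := x + k + 1) (by linarith [k.cast_nonneg (α := ℝ)])
  have hB := one_sub_rpow_pos hq0 hq1 (s := (k : ℝ) + 1) (by positivity)
  have hqk : q ^ ((k : ℝ) + 1) = q ^ (k + 1) := by exact_mod_cast rpow_natCast q (k + 1)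
  rw [qGammaTerm, log_mul (rpow_pos_of_pos (div_pos hA hB) _).ne' (rpow_pos_of_pos hB _).ne',
    log_rpow (div_pos hA hB), log_rpow hB, log_div hA.ne' hB.ne', eval_qGammaPolyTerm,
    gbinom_neg_natCast_add_one, hqk]
  ring

theorem qGammaTerm_pos (hq0 : 0 < q) (hq1 : q < 1) {x : ℝ} (hx : -1 < x) (k : ℕ) :
    0 < qGammaTerm n q x k := by
  have hA := one_sub_rpow_pos hq0 hq1 (s := x + k + 1) (by linarith [k.cast_nonneg (α := ℝ)])
  have hB := one_sub_rpow_pos hq0 hq1 (s := (k : ℝ) + 1) (by positivity)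
  exact mul_pos (rpow_pos_of_pos (div_pos hA hB) _) (rpow_pos_of_pos hB _)

variable (n q)

-- The coefficient of `exp ((m + 1) * log q * x)` in `-log (1 - q ^ (x + k + 1)) =
-- ∑ₘ q ^ ((m + 1) * (x + k + 1)) / (m + 1)`, weighted as in `log_qGammaTerm`; here `p = (k, m)`.
noncomputable def qGammaExpCoeff (p : ℕ × ℕ) : ℝ :=
  (-1) ^ (n - 1) * ((p.1 + (n - 1)).choose (n - 1) : ℝ) * q ^ ((p.1 + 1) * (p.2 + 1)) / (p.2 + 1)

noncomputable def qGammaExpRate (p : ℕ × ℕ) : ℝ := (p.2 + 1) * log q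

variable {n q}

theorem qGammaExpRate_nonpos (hq0 : 0 < q) (hq1 : q < 1) (p : ℕ × ℕ) : qGammaExpRate q p ≤ 0 :=
  mul_nonpos_of_nonneg_of_nonpos (by positivity) (log_nonpos hq0.le hq1.le)

theorem hasSum_qGammaExp (hq0 : 0 < q) (hq1 : q < 1) {x : ℝ} (hx : -1 < x) (k : ℕ) :
    HasSum (fun m => qGammaExpCoeff n q (k, m) * exp (qGammaExpRate q (k, m) * x))
      (-((-1) ^ (n - 1) * ((k + (n - 1)).choose (n - 1) : ℝ)) * log (1 - q ^ (x + k + 1))) := by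
  have ht0 : 0 < q ^ (x + k + 1) := rpow_pos_of_pos hq0 _
  have ht1 : q ^ (x + k + 1) < 1 :=
    rpow_lt_one hq0.le hq1 (by linarith [k.cast_nonneg (α := ℝ)])
  have h := (hasSum_pow_div_log_of_abs_lt_one (by rwa [abs_of_pos ht0])).mul_left
    ((-1) ^ (n - 1) * ((k + (n - 1)).choose (n - 1) : ℝ))
  rw [show ∀ a b : ℝ, -a * b = a * -b from fun a b => by ring]
  refine h.congr_fun fun m => ?_
  have hpow : (q ^ (x + k + 1)) ^ (m + 1) =
        q ^ ((k + 1) * (m + 1)) * exp ((m + 1) * log q * x) := by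
    rw [rpow_def_of_pos hq0, ← exp_nat_mul, ← exp_log hq0, ← exp_nat_mul, log_exp, ← exp_add]
    congr 1
    push_cast
    ring
  rw [hpow, qGammaExpCoeff, qGammaExpRate]
  push_cast
  ring

theorem summable_qGammaExp (hq0 : 0 < q) (hq1 : q < 1) {x₀ : ℝ} (hx₀ : -1 < x₀) (j : ℕ) :
    Summable fun p =>
      |qGammaExpCoeff n q p| * |qGammaExpRate q p| ^ j * exp (qGammaExpRate q p * x₀) := by
  have hL : log q < 0 := log_neg hq0 hq1
  set r := exp (log q * (1 + x₀))
  have hr1 : ‖r‖ < 1 := by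
    rw [norm_of_nonneg (exp_pos _).le, exp_lt_one_iff]
    exact mul_neg_of_neg_of_pos hL (by linarith)
  have hk : Summable fun k : ℕ => ((k + (n - 1)).choose (n - 1) : ℝ) * q ^ k :=
    summable_choose_mul_geometric_of_norm_lt_one (n - 1) (by rwa [norm_of_nonneg hq0.le])
  have hm : Summable fun m : ℕ => ((m : ℝ) + 1) ^ j * r ^ (m + 1) := by
    simpa using (summable_nat_add_iff (f := fun m : ℕ => (m : ℝ) ^ j * r ^ m) 1).2
      (summable_pow_mul_geometric_of_norm_lt_one j hr1)
  refine .of_nonneg_of_le (fun p => by positivity) (fun ⟨k, m⟩ => ?_)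
    ((hk.mul_of_nonneg hm (fun _ => by positivity) (fun _ => by positivity)).mul_left
      (|log q| ^ j))
  have hexp : q ^ ((k + 1) * (m + 1)) * exp ((m + 1) * log q * x₀) ≤ q ^ k * r ^ (m + 1) := by
    have hqpow : ∀ N : ℕ, q ^ N = exp (N * log q) := fun N => by rw [exp_nat_mul, exp_log hq0]
    rw [hqpow, hqpow, ← exp_nat_mul, ← exp_add, ← exp_add, exp_le_exp]
    have : (k : ℝ) * m * log q ≤ 0 := mul_nonpos_of_nonneg_of_nonpos (by positivity) hL.le
    push_cast
    nlinarith
  have hc : |qGammaExpCoeff n q (k, m)| =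
      ((k + (n - 1)).choose (n - 1) : ℝ) * q ^ ((k + 1) * (m + 1)) / (m + 1) := by
    rw [qGammaExpCoeff, abs_div, abs_mul, abs_mul, abs_pow, abs_neg, abs_one, one_pow, one_mul,
      abs_of_nonneg (by positivity), abs_of_nonneg (by positivity), abs_of_pos (by positivity)]
  have hν : |qGammaExpRate q (k, m)| = (m + 1) * |log q| := by
    rw [qGammaExpRate, abs_mul, abs_of_pos (by positivity)]
  have hdiv : ((m : ℝ) + 1) ^ j / (m + 1) ≤ ((m : ℝ) + 1) ^ j :=
    div_le_self (by positivity) (by linarith [m.cast_nonneg (α := ℝ)])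
  rw [hc, hν, mul_pow]
  calc ((k + (n - 1)).choose (n - 1) : ℝ) * q ^ ((k + 1) * (m + 1)) / (m + 1) *
        ((m + 1) ^ j * |log q| ^ j) * exp ((m + 1) * log q * x₀)
      = |log q| ^ j * (((k + (n - 1)).choose (n - 1) : ℝ) * (((m : ℝ) + 1) ^ j / (m + 1)) *
          (q ^ ((k + 1) * (m + 1)) * exp ((m + 1) * log q * x₀))) := by ring
    _ ≤ |log q| ^ j * (((k + (n - 1)).choose (n - 1) : ℝ) * ((m : ℝ) + 1) ^ j *
          (q ^ k * r ^ (m + 1))) := by gcongr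
    _ = _ := by ring

theorem qGammaExpCoeff_mul_rate_pow_nonneg (hq0 : 0 < q) (hq1 : q < 1) (hn : 1 ≤ n)
    (p : ℕ × ℕ) : 0 ≤ qGammaExpCoeff n q p * qGammaExpRate q p ^ (n + 1) := by
  obtain ⟨d, rfl⟩ := Nat.exists_eq_add_of_le' hn
  have hsign : (-1 : ℝ) ^ d * (-1) ^ (d + 1 + 1) = 1 := by
    rw [← pow_add, show d + (d + 1 + 1) = 2 * (d + 1) by ring, pow_mul]; simp
  have hL : 0 ≤ -log q := neg_nonneg.2 (log_nonpos hq0.le hq1.le)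
  have key : qGammaExpCoeff (d + 1) q p * qGammaExpRate q p ^ (d + 1 + 1) =
      ((p.1 + d).choose d : ℝ) * q ^ ((p.1 + 1) * (p.2 + 1)) / (p.2 + 1) *
        ((p.2 + 1) * -log q) ^ (d + 1 + 1) := by
    rw [qGammaExpCoeff, qGammaExpRate, Nat.add_sub_cancel,
      show ((p.2 : ℝ) + 1) * log q = -1 * ((p.2 + 1) * -log q) by ring, mul_pow]
    linear_combination (((p.1 + d).choose d : ℝ) * q ^ ((p.1 + 1) * (p.2 + 1)) / (p.2 + 1) *
        ((p.2 + 1) * -log q) ^ (d + 1 + 1)) * hsign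
  rw [key]
  positivity

theorem exists_log_qMultiGamma_eq (hq0 : 0 < q) (hq1 : q < 1) (hn : 1 ≤ n) :
    ∃ P : ℝ[X], P.natDegree ≤ n ∧ EqOn (fun x => log (qMultiGamma n q (x + 1)))
      (fun x => P.eval x + expSeries (qGammaExpCoeff n q) (qGammaExpRate q) x) (Ioi (-1)) := by
  obtain ⟨P, hPdeg, hP⟩ := exists_hasSum_eval_of_summable_coeff (natDegree_qGammaPolyTerm_le n q)
    (summable_coeff_qGammaPolyTerm hq0 hq1)
  refine ⟨C (-log (1 - q) / n !) * ∏ i ∈ range n, (X - C (i : ℝ)) + P, ?_,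
    fun x (hx : -1 < x) => ?_⟩
  · exact natDegree_add_le_of_degree_le ((natDegree_C_mul_prod_X_sub_C_le _ _ _).trans
      (card_range n).le) (hPdeg.trans (by omega))
  have hexp : HasSum
      (fun k : ℕ => -((-1) ^ (n - 1) * ((k + (n - 1)).choose (n - 1) : ℝ)) *
        log (1 - q ^ (x + k + 1)))
      (expSeries (qGammaExpCoeff n q) (qGammaExpRate q) x) := by
    refine HasSum.prod_fiberwise (Summable.hasSum (.of_norm_bounded
      (summable_qGammaExp (n := n) hq0 hq1 hx 0) fun p => ?_)) (hasSum_qGammaExp hq0 hq1 hx)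
    simp [abs_of_pos (exp_pos _)]
  have hlog : HasSum (fun k => log (qGammaTerm n q x k))
      (P.eval x + expSeries (qGammaExpCoeff n q) (qGammaExpRate q) x) := by
    simpa only [log_qGammaTerm hq0 hq1 hx] using (hP x).add hexp
  have hprod : HasProd (qGammaTerm n q x)
      (exp (P.eval x + expSeries (qGammaExpCoeff n q) (qGammaExpRate q) x)) :=
    hlog.rexp.congr_fun fun k => (exp_log (qGammaTerm_pos hq0 hq1 hx k)).symm
  dsimp only
  rw [qMultiGamma, if_neg (by omega), add_sub_cancel_right, hprod.tprod_eq,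
    log_mul (rpow_pos_of_pos (by linarith) _).ne' (exp_pos _).ne', log_rpow (by linarith), log_exp]
  simp only [eval_add, eval_mul, eval_C, eval_prod, eval_sub, eval_X, gbinom]
  ring

end QGammaExpansion

/-- For `0 < q < 1` and `n ≥ 1`, the function `x ↦ log G_n(x+1;q)` is `(n+1)`-times
differentiable on `(0,∞)` and its `(n+1)`-st derivative is nonnegative for `x ≥ 0`. -/
theorem qMultiGamma_log_contDiff_and_iteratedDeriv_nonneg (q : ℝ) (hq0 : 0 < q) (hq1 : q < 1)
    (n : ℕ) (hn : 1 ≤ n) :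
    ContDiffOn ℝ (n + 1) (fun x : ℝ => Real.log (qMultiGamma n q (x + 1))) (Set.Ioi 0) ∧
    ∀ x : ℝ, 0 ≤ x →
      0 ≤ iteratedDeriv (n + 1) (fun x : ℝ => Real.log (qMultiGamma n q (x + 1))) x := by
  obtain ⟨P, hPdeg, hlog⟩ := exists_log_qMultiGamma_eq hq0 hq1 hn
  let g : ℕ → ℝ → ℝ := fun j x => (derivative^[j] P).eval x +
    expSeries (fun p => qGammaExpCoeff n q p * qGammaExpRate q p ^ j) (qGammaExpRate q) x
  have hg : ∀ j, ∀ x ∈ Ioi (-1 : ℝ), HasDerivAt (g j) (g (j + 1) x) x := fun j x hx => by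
    have hx₀ : -1 < (x - 1) / 2 := by linarith [mem_Ioi.1 hx]
    simp only [g, Function.iterate_succ_apply']
    exact (Polynomial.hasDerivAt _ x).fun_add <| hasDerivAt_expSeries_mul_pow
      (qGammaExpRate_nonpos hq0 hq1) (summable_qGammaExp hq0 hq1 hx₀) j (by linarith)
  have hF : EqOn (fun x => log (qMultiGamma n q (x + 1))) (g 0) (Ioi (-1)) := by
    simpa [g] using hlog
  refine ⟨(contDiffOn_of_hasDerivAt_succ isOpen_Ioi hg hF).mono
    (Ioi_subset_Ioi (by norm_num)), fun x hx => ?_⟩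
  rw [iteratedDeriv_eqOn_of_hasDerivAt_succ isOpen_Ioi hg hF (n + 1)
    (mem_Ioi.2 (by linarith))]
  simp only [g, iterate_derivative_eq_zero (Nat.lt_succ_of_le hPdeg), eval_zero, zero_add]
  exact tsum_nonneg fun p =>
    mul_nonneg (qGammaExpCoeff_mul_rate_pow_nonneg hq0 hq1 hn p) (exp_pos _).le
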